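/- Let σ₀ determine a weak, graded Riemannian metric on a Hilbertian H-type group M = V ⊕ W. If σ₀ is strictly weak, i.e. there is no c > 0 with ‖v‖_{σ₀} ≥ c|v| for all v ∈ M, then there exists no Levi-Civita covariant derivative for σ. -/

import Mathlib

open scoped RealInnerProductSpace

/-- A Hilbertian H-type group: a real Hilbert space `M` with an orthogonal decomposition
`M = V ⊕ W` into nontrivial closed subspaces, `W` finite dimensional, a continuous
skew-symmetric Lie bracket with `[M,M] ⊆ W`, `[M,W] = 0`, and the map `J` determined by
`⟪J z x, y⟫ = ⟪z, [x,y]⟫` satisfying `J_z ∘ J_z = -‖z‖² id` on `V`. -/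
structure HTypeGroup (M : Type*) [NormedAddCommGroup M] [InnerProductSpace ℝ M]
    [CompleteSpace M] where
  V : Submodule ℝ M
  W : Submodule ℝ M
  V_closed : IsClosed (V : Set M)
  W_closed : IsClosed (W : Set M)
  V_nontrivial : V ≠ ⊥
  W_nontrivial : W ≠ ⊥
  W_findim : FiniteDimensional ℝ ↥W
  orthogonal : ∀ v ∈ V, ∀ w ∈ W, ⟪v, w⟫ = 0
  proj1 : M →L[ℝ] M
  proj2 : M →L[ℝ] M
  proj1_mem : ∀ v : M, proj1 v ∈ V
  proj2_mem : ∀ v : M, proj2 v ∈ W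
  proj_add : ∀ v : M, proj1 v + proj2 v = v
  bracket : M →L[ℝ] M →L[ℝ] M
  bracket_skew : ∀ u v : M, bracket u v = - bracket v u
  bracket_mem_W : ∀ u v : M, bracket u v ∈ W
  bracket_W : ∀ u : M, ∀ w ∈ W, bracket u w = 0
  Jmap : M →L[ℝ] M →L[ℝ] M
  Jmap_mem_V : ∀ z ∈ W, ∀ x ∈ V, Jmap z x ∈ V
  Jmap_inner : ∀ z ∈ W, ∀ x ∈ V, ∀ y ∈ V, ⟪Jmap z x, y⟫ = ⟪z, bracket x y⟫
  Jmap_sq : ∀ z ∈ W, ∀ x ∈ V, Jmap z (Jmap z x) = -(‖z‖ ^ 2) • x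

/-- The left invariant metric at the point `p`:
`σ_p(v, w) = σ₀(v − (1/2)[p,v], w − (1/2)[p,w])`. -/
noncomputable def sigmaAt {M : Type*} [NormedAddCommGroup M] [InnerProductSpace ℝ M] [CompleteSpace M]
    (H : HTypeGroup M) (σ : M → M → ℝ) (p v w : M) : ℝ :=
  σ (v - (2⁻¹ : ℝ) • H.bracket p v) (w - (2⁻¹ : ℝ) • H.bracket p w)

/-- The left invariant vector field `X_v(p) = v + (1/2)[p, v]`. -/
noncomputable def leftInvVF {M : Type*} [NormedAddCommGroup M] [InnerProductSpace ℝ M] [CompleteSpace M]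
    (H : HTypeGroup M) (v : M) : M → M :=
  fun p => v + (2⁻¹ : ℝ) • H.bracket p v

/-- A Levi-Civita covariant derivative for the left invariant metric `σ` determined by `σ₀`:
an ℝ-bilinear operation on smooth vector fields, sending smooth vector fields to a smooth
vector field, tensorial in the first argument, satisfying the Leibniz rule in the second
argument, torsion-free, and compatible with the metric `σ`. -/
def IsLeviCivita {M : Type*} [NormedAddCommGroup M] [InnerProductSpace ℝ M] [CompleteSpace M]
    (H : HTypeGroup M) (σ : M → M → ℝ)
    (D : (M → M) → (M → M) → (M → M)) : Prop :=
  (∀ X Y : M → M, ContDiff ℝ (⊤ : ℕ∞) X → ContDiff ℝ (⊤ : ℕ∞) Y → ContDiff ℝ (⊤ : ℕ∞) (D X Y)) ∧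
  (∀ X X' Y : M → M, ContDiff ℝ (⊤ : ℕ∞) X → ContDiff ℝ (⊤ : ℕ∞) X' → ContDiff ℝ (⊤ : ℕ∞) Y →
      D (X + X') Y = D X Y + D X' Y) ∧
  (∀ X Y Y' : M → M, ContDiff ℝ (⊤ : ℕ∞) X → ContDiff ℝ (⊤ : ℕ∞) Y → ContDiff ℝ (⊤ : ℕ∞) Y' →
      D X (Y + Y') = D X Y + D X Y') ∧
  (∀ (c : ℝ) (X Y : M → M), ContDiff ℝ (⊤ : ℕ∞) X → ContDiff ℝ (⊤ : ℕ∞) Y →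
      D (c • X) Y = c • D X Y ∧ D X (c • Y) = c • D X Y) ∧
  (∀ (f : M → ℝ) (X Y : M → M), ContDiff ℝ (⊤ : ℕ∞) f → ContDiff ℝ (⊤ : ℕ∞) X → ContDiff ℝ (⊤ : ℕ∞) Y →
      D (fun p => f p • X p) Y = fun p => f p • D X Y p) ∧
  (∀ (f : M → ℝ) (X Y : M → M), ContDiff ℝ (⊤ : ℕ∞) f → ContDiff ℝ (⊤ : ℕ∞) X → ContDiff ℝ (⊤ : ℕ∞) Y →
      D X (fun p => f p • Y p) =
        fun p => (fderiv ℝ f p (X p)) • Y p + f p • D X Y p) ∧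
  (∀ X Y : M → M, ContDiff ℝ (⊤ : ℕ∞) X → ContDiff ℝ (⊤ : ℕ∞) Y → ∀ p : M,
      D X Y p - D Y X p = fderiv ℝ Y p (X p) - fderiv ℝ X p (Y p)) ∧
  (∀ X Y Z : M → M, ContDiff ℝ (⊤ : ℕ∞) X → ContDiff ℝ (⊤ : ℕ∞) Y → ContDiff ℝ (⊤ : ℕ∞) Z → ∀ p : M,
      fderiv ℝ (fun q => sigmaAt H σ q (X q) (Y q)) p (Z p) =
        sigmaAt H σ p (D Z X p) (Y p) + sigmaAt H σ p (X p) (D Z Y p))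

private lemma fderiv_aux {M : Type*} [NormedAddCommGroup M] [NormedSpace ℝ M]
    (B : M →L[ℝ] M →L[ℝ] M) (σc : M →L[ℝ] M →L[ℝ] ℝ) (u v w : M) :
    fderiv ℝ (fun q => σc (u - (2⁻¹:ℝ) • B q u) (v - (2⁻¹:ℝ) • B q v)) 0 w
      = σc u (-((2⁻¹:ℝ) • B w v)) + σc (-((2⁻¹:ℝ) • B w u)) v := by
  have h1 : HasFDerivAt (fun q : M => u - (2⁻¹:ℝ) • B q u)
      (-((2⁻¹:ℝ) • B.flip u)) 0 := by
    have := (((2⁻¹:ℝ) • B.flip u).hasFDerivAt (x := (0:M))).const_sub u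
    simpa using this
  have h2 : HasFDerivAt (fun q : M => v - (2⁻¹:ℝ) • B q v)
      (-((2⁻¹:ℝ) • B.flip v)) 0 := by
    have := (((2⁻¹:ℝ) • B.flip v).hasFDerivAt (x := (0:M))).const_sub v
    simpa using this
  have hpair := h1.prodMk h2
  have hb := (σc.isBoundedBilinearMap.hasFDerivAt
      ((fun q : M => (u - (2⁻¹:ℝ) • B q u, v - (2⁻¹:ℝ) • B q v)) 0)).comp (0:M) hpair
  have hb' : HasFDerivAt (fun q => σc (u - (2⁻¹:ℝ) • B q u) (v - (2⁻¹:ℝ) • B q v))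
      ((σc.isBoundedBilinearMap.deriv ((fun q : M => (u - (2⁻¹:ℝ) • B q u, v - (2⁻¹:ℝ) • B q v)) 0)).comp
        ((-((2⁻¹:ℝ) • B.flip u)).prod (-((2⁻¹:ℝ) • B.flip v)))) 0 := hb
  rw [hb'.fderiv]
  simp [IsBoundedBilinearMap.deriv_apply]


set_option maxHeartbeats 2000000 in
set_option synthInstance.maxHeartbeats 1000000 in
/-- If `σ₀` determines a strictly weak, graded Riemannian metric on a
Hilbertian H-type group `M = V ⊕ W`, then no Levi-Civita covariant derivative for `σ`
exists. -/
theorem statement_14 {M : Type*} [NormedAddCommGroup M] [InnerProductSpace ℝ M]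
    [CompleteSpace M] (H : HTypeGroup M) (σ : M → M → ℝ)
    (h_symm : ∀ v w : M, σ v w = σ w v)
    (h_posdef : ∀ v : M, v ≠ 0 → 0 < σ v v)
    (h_bilin : ∀ v : M, IsLinearMap ℝ (σ v) ∧ IsLinearMap ℝ (fun w => σ w v))
    (c₀ : ℝ) (hc₀ : 0 < c₀)
    (h_cont : ∀ v : M, Real.sqrt (σ v v) ≤ c₀ * ‖v‖)
    (h_graded : ∀ v ∈ H.V, ∀ w ∈ H.W, σ v w = 0)
    (h_strictly_weak : ¬ ∃ c > (0 : ℝ), ∀ v : M, c * ‖v‖ ≤ Real.sqrt (σ v v)) :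
    ¬ ∃ D : (M → M) → (M → M) → (M → M), IsLeviCivita H σ D := by
  classical
  rintro ⟨D, hsm, hadd1, hadd2, hsmul, htens, hleib, htors, hcompat⟩
  -- Basic bilinearity facts
  have hL : ∀ v : M, IsLinearMap ℝ (σ v) := fun v => (h_bilin v).1
  have hR : ∀ v : M, IsLinearMap ℝ (fun w => σ w v) := fun v => (h_bilin v).2
  have hzero : ∀ w : M, σ 0 w = 0 := fun w => (hR w).map_zero
  have hzero' : ∀ w : M, σ w 0 = 0 := fun w => (hL w).map_zero
  have hnn : ∀ v : M, 0 ≤ σ v v := by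
    intro v
    by_cases hv : v = 0
    · simp [hv, hzero]
    · exact (h_posdef v hv).le
  -- Cauchy-Schwarz
  have hCS : ∀ a b : M, σ a b ^ 2 ≤ σ a a * σ b b := by
    intro a b
    have key : ∀ t : ℝ, 0 ≤ σ b b * (t * t) + (2 * σ a b) * t + σ a a := by
      intro t
      have h0 := hnn (a + t • b)
      have e1 : σ (a + t • b) (a + t • b)
          = σ a a + t * σ a b + (t * σ b a + t * (t * σ b b)) := by
        rw [(hR (a + t•b)).map_add, (hR (a + t•b)).map_smul]
        rw [(hL a).map_add, (hL a).map_smul, (hL b).map_add, (hL b).map_smul]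
        simp [smul_eq_mul]
        ring
      rw [e1] at h0
      have hs := h_symm a b
      rw [← hs] at h0
      linarith
    have hd := discrim_le_zero key
    rw [discrim] at hd
    nlinarith [hd]
  have hCS' : ∀ a b : M, σ a b ≤ Real.sqrt (σ a a) * Real.sqrt (σ b b) := by
    intro a b
    have h1 : σ a b ≤ |σ a b| := le_abs_self _
    have h2 : |σ a b| = Real.sqrt ((σ a b) ^ 2) := (Real.sqrt_sq_eq_abs _).symm
    have h3 : Real.sqrt ((σ a b) ^ 2) ≤ Real.sqrt (σ a a * σ b b) :=
      Real.sqrt_le_sqrt (hCS a b)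
    rw [Real.sqrt_mul (hnn a)] at h3
    linarith
  have hbound : ∀ a b : M, ‖σ a b‖ ≤ (c₀ * c₀) * ‖a‖ * ‖b‖ := by
    intro a b
    rw [Real.norm_eq_abs]
    have h2 : |σ a b| = Real.sqrt ((σ a b) ^ 2) := (Real.sqrt_sq_eq_abs _).symm
    have h3 : Real.sqrt ((σ a b) ^ 2) ≤ Real.sqrt (σ a a * σ b b) :=
      Real.sqrt_le_sqrt (hCS a b)
    rw [Real.sqrt_mul (hnn a)] at h3
    have ha := h_cont a
    have hb := h_cont b
    have hsa := Real.sqrt_nonneg (σ a a)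
    have hsb := Real.sqrt_nonneg (σ b b)
    have hna : (0:ℝ) ≤ ‖a‖ := norm_nonneg a
    have hnb : (0:ℝ) ≤ ‖b‖ := norm_nonneg b
    nlinarith [mul_le_mul ha hb hsb (by positivity : (0:ℝ) ≤ c₀ * ‖a‖)]
  -- the continuous bilinear version of σ
  set σl : M →ₗ[ℝ] M →ₗ[ℝ] ℝ := LinearMap.mk₂ ℝ σ
    (fun a b c => by
      have := (hR c).map_add a b; simpa using this)
    (fun r a c => by
      have := (hR c).map_smul r a; simpa using this)
    (fun a b c => (hL a).map_add b c)
    (fun r a c => (hL a).map_smul r c) with hσl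
  set σc : M →L[ℝ] M →L[ℝ] ℝ := LinearMap.mkContinuous₂ σl (c₀ * c₀) hbound with hσc
  have hσca : ∀ a b : M, σc a b = σ a b := fun a b => rfl
  -- value of sigmaAt at 0
  have hsig0 : ∀ a b : M, sigmaAt H σ 0 a b = σ a b := by
    intro a b
    simp [sigmaAt, map_zero]
  -- constants and their covariant derivatives
  set Dc : M → M → M := fun a b => D (fun _ => a) (fun _ => b) 0 with hDc
  have hconst : ∀ a : M, ContDiff ℝ (⊤ : ℕ∞) (fun _ : M => a) := fun a => contDiff_const
  have hDsymm : ∀ a b : M, Dc a b = Dc b a := by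
    intro a b
    have h := htors (fun _ => a) (fun _ => b) (hconst a) (hconst b) 0
    simp only [fderiv_fun_const] at h
    simpa [hDc, sub_eq_zero] using h
  -- the fundamental compatibility equation for constants
  have hE : ∀ a b c : M, σ (Dc c a) b + σ a (Dc c b)
      = -(2⁻¹ * σ (H.bracket c a) b) + -(2⁻¹ * σ a (H.bracket c b)) := by
    intro a b c
    have h := hcompat (fun _ => a) (fun _ => b) (fun _ => c) (hconst a) (hconst b) (hconst c) 0
    rw [hsig0, hsig0] at h
    have heq : (fun q => sigmaAt H σ q a b)
        = fun q => σc (a - (2⁻¹:ℝ) • H.bracket q a) (b - (2⁻¹:ℝ) • H.bracket q b) := rfl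
    rw [heq] at h
    rw [fderiv_aux H.bracket σc a b c] at h
    rw [hσca, hσca] at h
    rw [← h]
    have e1 : σ a (-((2⁻¹:ℝ) • H.bracket c b)) = -(2⁻¹ * σ a (H.bracket c b)) := by
      have := (hL a).map_smul (-(2⁻¹:ℝ)) (H.bracket c b)
      simpa [neg_smul, smul_eq_mul] using this
    have e2 : σ (-((2⁻¹:ℝ) • H.bracket c a)) b = -(2⁻¹ * σ (H.bracket c a) b) := by
      have := (hR b).map_smul (-(2⁻¹:ℝ)) (H.bracket c a)
      simpa [neg_smul, smul_eq_mul] using this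
    rw [e1, e2]
    ring
  -- fix a nonzero element of W
  obtain ⟨v, hvW, hvne⟩ := (Submodule.ne_bot_iff H.W).mp H.W_nontrivial
  -- the key identity: 2 σ(Dc u v, w) = -σ(v, [u,w]) for all u w
  have hKey : ∀ u w : M, 2 * σ (Dc u v) w = -σ v (H.bracket u w) := by
    intro u w
    have E1 := hE v w u
    have E2 := hE u w v
    have E3 := hE u v w
    have hBuv : H.bracket u v = 0 := H.bracket_W u v hvW
    have hBwv : H.bracket w v = 0 := H.bracket_W w v hvW
    have hBvu : H.bracket v u = 0 := by rw [H.bracket_skew v u, hBuv, neg_zero]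
    have hBvw : H.bracket v w = 0 := by rw [H.bracket_skew v w, hBwv, neg_zero]
    have hBwu : σ (H.bracket w u) v = -σ (H.bracket u w) v := by
      rw [H.bracket_skew w u]
      exact (hR v).map_neg _
    simp only [hBuv, hBvu, hBvw, hBwv, hzero, hzero'] at E1 E2 E3
    have s1 : Dc u w = Dc w u := hDsymm u w
    have s2 : Dc v w = Dc w v := hDsymm v w
    have s3 : Dc v u = Dc u v := hDsymm v u
    have hsy : σ v (Dc u w) = σ (Dc w u) v := by rw [s1, h_symm]
    have hsy2 : σ v (H.bracket u w) = σ (H.bracket u w) v := h_symm _ _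
    rw [s2, s3] at E2
    -- E1 : σ (Dc u v) w + σ v (Dc u w) = -(2⁻¹ σ v [u,w])
    -- E2 : σ (Dc u v) w + σ u (Dc w v) = 0
    -- E3 : σ (Dc w u) v + σ u (Dc w v) = -(2⁻¹ σ [w,u] v)
    linarith [E1, E2, E3, hsy, hsy2, hBwu]
  -- Riesz representative of σ v ·
  set φl : M →ₗ[ℝ] ℝ := IsLinearMap.mk' (σ v) (hL v) with hφl
  set φ : M →L[ℝ] ℝ := LinearMap.mkContinuous φl ((c₀ * c₀) * ‖v‖)
    (fun w => by simpa [hφl, mul_assoc] using hbound v w) with hφ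
  set v' : M := (InnerProductSpace.toDual ℝ M).symm φ with hv'
  have hv'prop : ∀ w : M, ⟪v', w⟫ = σ v w := by
    intro w
    rw [hv']
    exact InnerProductSpace.toDual_symm_apply
  have hv'W : v' ∈ H.W := by
    have h1 : H.proj1 v' = 0 := by
      have e1 : ⟪v', H.proj1 v'⟫ = 0 := by
        rw [hv'prop, h_symm]
        exact h_graded _ (H.proj1_mem v') v hvW
      have e2 : ⟪H.proj2 v', H.proj1 v'⟫ = 0 := by
        rw [real_inner_comm]
        exact H.orthogonal _ (H.proj1_mem v') _ (H.proj2_mem v')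
      have e3 : ⟪H.proj1 v', H.proj1 v'⟫ = 0 := by
        have := H.proj_add v'
        have : ⟪H.proj1 v' + H.proj2 v', H.proj1 v'⟫ = 0 := by rw [this]; exact e1
        rw [inner_add_left, e2] at this
        linarith
      exact inner_self_eq_zero.mp e3
    have := H.proj_add v'
    rw [h1, zero_add] at this
    rw [← this]
    exact H.proj2_mem v'
  have hv'ne : v' ≠ 0 := by
    intro h0
    have := hv'prop v
    rw [h0, inner_zero_left] at this
    exact absurd this.symm (ne_of_gt (h_posdef v hvne))
  have hv'norm : ‖v'‖ ≠ 0 := fun h => hv'ne (norm_eq_zero.mp h)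
  -- representability of ⟪x, ·⟫ for x ∈ V
  have hRep : ∀ x : M, x ∈ H.V → ∃ A : M, ∀ w : M, σ A w = ⟪x, w⟫ := by
    intro x hx
    set u : M := -(‖v'‖ ^ 2)⁻¹ • (H.Jmap v' x) with hu
    have huV : u ∈ H.V := H.V.smul_mem _ (H.Jmap_mem_V v' hv'W x hx)
    have hJu : H.Jmap v' u = x := by
      rw [hu, map_smul, H.Jmap_sq v' hv'W x hx, smul_smul]
      have : -(‖v'‖ ^ 2)⁻¹ * -(‖v'‖ ^ 2) = 1 := by
        field_simp
      rw [this, one_smul]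
    refine ⟨(-2 : ℝ) • Dc u v, fun w => ?_⟩
    have e1 : σ ((-2:ℝ) • Dc u v) w = -2 * σ (Dc u v) w := by
      have := (hR w).map_smul (-2:ℝ) (Dc u v)
      simpa [smul_eq_mul] using this
    have e2 : -2 * σ (Dc u v) w = σ v (H.bracket u w) := by
      have := hKey u w; linarith
    rw [e1, e2, ← hv'prop]
    -- ⟪v', [u,w]⟫ = ⟪x, w⟫
    have hw : w = H.proj1 w + H.proj2 w := (H.proj_add w).symm
    have hbw : H.bracket u w = H.bracket u (H.proj1 w) := by
      conv_lhs => rw [hw]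
      rw [map_add, H.bracket_W u _ (H.proj2_mem w), add_zero]
    rw [hbw, ← H.Jmap_inner v' hv'W u huV (H.proj1 w) (H.proj1_mem w), hJu]
    conv_rhs => rw [hw]
    rw [inner_add_right, H.orthogonal x hx _ (H.proj2_mem w), add_zero]
  -- uniqueness of the representative
  have hUniq : ∀ A A' : M, (∀ w : M, σ A w = σ A' w) → A = A' := by
    intro A A' h
    by_contra hne
    have hd : A - A' ≠ 0 := sub_ne_zero.mpr hne
    have : σ (A - A') (A - A') = 0 := by
      have e : ∀ w, σ (A - A') w = 0 := by
        intro w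
        have := (hR w).map_sub A A'
        rw [this, h w, sub_self]
      exact e _
    exact absurd this (ne_of_gt (h_posdef _ hd))
  -- the operator T and its projection S
  set T : H.V → M := fun x => Classical.choose (hRep x.1 x.2) with hT
  have hTspec : ∀ (x : H.V) (w : M), σ (T x) w = ⟪(x : M), w⟫ :=
    fun x => Classical.choose_spec (hRep x.1 x.2)
  have hTadd : ∀ x y : H.V, T (x + y) = T x + T y := by
    intro x y
    apply hUniq
    intro w
    rw [hTspec]
    have := (hR w).map_add (T x) (T y)
    rw [this, hTspec, hTspec, Submodule.coe_add, inner_add_left]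
  have hTsmul : ∀ (r : ℝ) (x : H.V), T (r • x) = r • T x := by
    intro r x
    apply hUniq
    intro w
    rw [hTspec]
    have := (hR w).map_smul r (T x)
    rw [this, hTspec, Submodule.coe_smul, real_inner_smul_left]
    simp [smul_eq_mul]
  set S : H.V →ₗ[ℝ] H.V :=
    { toFun := fun x => ⟨H.proj1 (T x), H.proj1_mem _⟩
      map_add' := fun x y => by
        ext
        simp [hTadd]
      map_smul' := fun r x => by
        ext
        simp [hTsmul] } with hS
  haveI : CompleteSpace H.V := H.V_closed.completeSpace_coe
  -- inner products with T
  have hTinner : ∀ x : H.V, ∀ y : H.V, ⟪T x, (y:M)⟫ = ⟪(x:M), T y⟫ := by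
    intro x y
    have e1 : σ (T x) (T y) = ⟪(x:M), T y⟫ := hTspec x (T y)
    have e2 : σ (T y) (T x) = ⟪(y:M), T x⟫ := hTspec y (T x)
    rw [← e1, h_symm, e2, real_inner_comm]
  have hSinner : ∀ x y : H.V, ⟪((S x : H.V) : M), (y : M)⟫ = ⟪T x, (y:M)⟫ := by
    intro x y
    have : T x = H.proj1 (T x) + H.proj2 (T x) := (H.proj_add (T x)).symm
    conv_rhs => rw [this]
    rw [inner_add_left]
    have : ⟪H.proj2 (T x), (y:M)⟫ = 0 := by
      rw [real_inner_comm]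
      exact H.orthogonal _ y.2 _ (H.proj2_mem _)
    rw [this, add_zero]
    rfl
  have hSsym : S.IsSymmetric := by
    intro x y
    show ⟪((S x : H.V) : M), (y : M)⟫ = ⟪(x : M), ((S y : H.V) : M)⟫
    have e : (⟪(x:M), ((S y : H.V) : M)⟫) = ⟪(x:M), T y⟫ := by
      rw [real_inner_comm, hSinner y x, real_inner_comm]
    rw [hSinner x y, hTinner x y, e]
  have hScont : Continuous S := hSsym.continuous
  set Scl : H.V →L[ℝ] H.V := ⟨S, hScont⟩ with hScl
  -- bound on V
  set K1 : ℝ := c₀ * (‖Scl‖ + 1) with hK1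
  have hK1pos : 0 < K1 := by positivity
  have hVbound : ∀ x : M, x ∈ H.V → ‖x‖ ≤ K1 * Real.sqrt (σ x x) := by
    intro x hx
    by_cases h0 : x = 0
    · subst h0; rw [norm_zero]; positivity
    set xv : H.V := ⟨x, hx⟩ with hxv
    set s : M := ((S xv : H.V) : M) with hs'
    have e1 : ‖x‖ ^ 2 = σ (T xv) x := by
      rw [hTspec xv x]
      exact (real_inner_self_eq_norm_sq x).symm
    have esplit : σ (T xv) x = σ s x + σ (H.proj2 (T xv)) x := by
      have h := (hR x).map_add (H.proj1 (T xv)) (H.proj2 (T xv))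
      calc σ (T xv) x = σ (H.proj1 (T xv) + H.proj2 (T xv)) x := by rw [H.proj_add]
        _ = σ (H.proj1 (T xv)) x + σ (H.proj2 (T xv)) x := h
        _ = σ s x + σ (H.proj2 (T xv)) x := rfl
    have e4 : σ (H.proj2 (T xv)) x = 0 := by
      rw [h_symm]
      exact h_graded x hx _ (H.proj2_mem _)
    have e5 : σ s x ≤ Real.sqrt (σ s s) * Real.sqrt (σ x x) := hCS' _ _
    have e6 : Real.sqrt (σ s s) ≤ c₀ * ‖s‖ := h_cont s
    have e8 : ‖s‖ ≤ ‖Scl‖ * ‖x‖ := Scl.le_opNorm xv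
    have hfin : ‖x‖^2 ≤ (c₀ * (‖Scl‖ * ‖x‖)) * Real.sqrt (σ x x) := by
      have t1 : Real.sqrt (σ s s) * Real.sqrt (σ x x) ≤ (c₀ * ‖s‖) * Real.sqrt (σ x x) :=
        mul_le_mul_of_nonneg_right e6 (Real.sqrt_nonneg _)
      have t2 : (c₀ * ‖s‖) * Real.sqrt (σ x x) ≤ (c₀ * (‖Scl‖ * ‖x‖)) * Real.sqrt (σ x x) :=
        mul_le_mul_of_nonneg_right (mul_le_mul_of_nonneg_left e8 hc₀.le) (Real.sqrt_nonneg _)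
      calc ‖x‖^2 = σ (T xv) x := e1
        _ = σ s x + σ (H.proj2 (T xv)) x := esplit
        _ = σ s x := by rw [e4, add_zero]
        _ ≤ Real.sqrt (σ s s) * Real.sqrt (σ x x) := e5
        _ ≤ (c₀ * ‖s‖) * Real.sqrt (σ x x) := t1
        _ ≤ (c₀ * (‖Scl‖ * ‖x‖)) * Real.sqrt (σ x x) := t2
    have hnormpos : 0 < ‖x‖ := norm_pos_iff.mpr h0
    have hSnn : (0:ℝ) ≤ ‖Scl‖ := Scl.opNorm_nonneg
    have hsx := Real.sqrt_nonneg (σ x x)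
    rw [hK1]
    nlinarith [hfin, hnormpos, hsx, hc₀.le, mul_nonneg hc₀.le hsx]
  -- bound on W
  haveI : FiniteDimensional ℝ H.W := H.W_findim
  have hWbound : ∃ K2 : ℝ, 0 < K2 ∧ ∀ y : M, y ∈ H.W → ‖y‖ ≤ K2 * Real.sqrt (σ y y) := by
    obtain ⟨y0, hy0W, hy0ne⟩ := (Submodule.ne_bot_iff H.W).mp H.W_nontrivial
    set p0 : H.W := (‖y0‖⁻¹ : ℝ) • ⟨y0, hy0W⟩ with hp0
    have hy0norm : ‖y0‖ ≠ 0 := fun h => hy0ne (norm_eq_zero.mp h)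
    have hp0mem : p0 ∈ Metric.sphere (0 : H.W) 1 := by
      simp only [Metric.mem_sphere, dist_zero_right, hp0, norm_smul, norm_inv, norm_norm]
      show ‖y0‖⁻¹ * ‖y0‖ = 1
      exact inv_mul_cancel₀ hy0norm
    have hfc : Continuous (fun y : H.W => σ (y : M) (y : M)) := by
      have : Continuous (fun y : H.W => σc (y : M) (y : M)) := by
        exact σc.isBoundedBilinearMap.continuous.comp
          (continuous_subtype_val.prodMk continuous_subtype_val)
      exact this
    obtain ⟨z, hzS, hzmin⟩ := (isCompact_sphere (0 : H.W) 1).exists_isMinOn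
      ⟨p0, hp0mem⟩ hfc.continuousOn
    set m : ℝ := σ (z : M) (z : M) with hm
    have hzne : (z : M) ≠ 0 := by
      intro h
      have : ‖z‖ = 1 := by simpa [Metric.mem_sphere, dist_zero_right] using hzS
      have hz0 : z = 0 := by ext; exact h
      rw [hz0] at this
      simp at this
    have hmpos : 0 < m := h_posdef _ hzne
    refine ⟨(Real.sqrt m)⁻¹, by positivity, fun y hyW => ?_⟩
    by_cases hy0 : y = 0
    · subst hy0; rw [norm_zero]; positivity
    set yv : H.W := ⟨y, hyW⟩ with hyv
    have hynorm : ‖y‖ ≠ 0 := fun h => hy0 (norm_eq_zero.mp h)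
    have hyunit : ((‖y‖⁻¹ : ℝ) • yv) ∈ Metric.sphere (0 : H.W) 1 := by
      simp only [Metric.mem_sphere, dist_zero_right, norm_smul, norm_inv, norm_norm]
      show ‖y‖⁻¹ * ‖yv‖ = 1
      have : ‖yv‖ = ‖y‖ := rfl
      rw [this]
      exact inv_mul_cancel₀ hynorm
    have hmin := hzmin hyunit
    have hval : σ ((((‖y‖⁻¹ : ℝ) • yv : H.W)) : M) ((((‖y‖⁻¹ : ℝ) • yv : H.W)) : M)
        = (‖y‖⁻¹)^2 * σ y y := by
      have hc : ((((‖y‖⁻¹ : ℝ) • yv : H.W)) : M) = (‖y‖⁻¹ : ℝ) • y := rfl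
      rw [hc]
      rw [(hR _).map_smul, (hL _).map_smul]
      simp [smul_eq_mul]
      ring
    have hge : m ≤ (‖y‖⁻¹)^2 * σ y y := by
      have : m ≤ σ ((((‖y‖⁻¹ : ℝ) • yv : H.W)) : M) ((((‖y‖⁻¹ : ℝ) • yv : H.W)) : M) := hmin
      rwa [hval] at this
    have hy2 : m * ‖y‖^2 ≤ σ y y := by
      have hnp : (0:ℝ) < ‖y‖ := norm_pos_iff.mpr hy0
      have h2 := mul_le_mul_of_nonneg_left hge (le_of_lt (by positivity : (0:ℝ) < ‖y‖^2))
      calc m * ‖y‖^2 = ‖y‖^2 * m := by ring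
        _ ≤ ‖y‖^2 * ((‖y‖⁻¹)^2 * σ y y) := h2
        _ = σ y y := by field_simp
    -- conclude ‖y‖ ≤ (√m)⁻¹ √(σ y y)
    have hsm : (0:ℝ) < Real.sqrt m := Real.sqrt_pos.mpr hmpos
    have key : ‖y‖ * Real.sqrt m ≤ Real.sqrt (σ y y) := by
      have h1 : (‖y‖ * Real.sqrt m)^2 ≤ σ y y := by
        have := Real.sq_sqrt hmpos.le
        nlinarith [hy2]
      have h2 : (0:ℝ) ≤ ‖y‖ * Real.sqrt m := by positivity
      exact (Real.le_sqrt h2 (hnn y)).mpr h1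
    calc ‖y‖ = (Real.sqrt m)⁻¹ * (‖y‖ * Real.sqrt m) := by field_simp
      _ ≤ (Real.sqrt m)⁻¹ * Real.sqrt (σ y y) := by
          apply mul_le_mul_of_nonneg_left key (by positivity)
  obtain ⟨K2, hK2pos, hWb⟩ := hWbound
  -- combine
  set K : ℝ := max K1 K2 with hK
  have hKpos : 0 < K := lt_of_lt_of_le hK1pos (le_max_left _ _)
  apply h_strictly_weak
  refine ⟨K⁻¹, by positivity, fun x => ?_⟩
  set a : M := H.proj1 x with ha
  set b : M := H.proj2 x with hb
  have hx : x = a + b := (H.proj_add x).symm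
  have haV : a ∈ H.V := H.proj1_mem x
  have hbW : b ∈ H.W := H.proj2_mem x
  have hnormsq : ‖x‖^2 = ‖a‖^2 + ‖b‖^2 := by
    rw [hx, norm_add_sq_real, H.orthogonal a haV b hbW]
    ring
  have hsigsum : σ x x = σ a a + σ b b := by
    rw [hx]
    rw [(hR (a+b)).map_add]
    rw [(hL a).map_add, (hL b).map_add]
    rw [h_graded a haV b hbW]
    have : σ b a = 0 := by rw [h_symm]; exact h_graded a haV b hbW
    rw [this]
    ring
  have hA := hVbound a haV
  have hB := hWb b hbW
  have hA' : ‖a‖ ≤ K * Real.sqrt (σ a a) := by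
    calc ‖a‖ ≤ K1 * Real.sqrt (σ a a) := hA
      _ ≤ K * Real.sqrt (σ a a) := by
        apply mul_le_mul_of_nonneg_right (le_max_left _ _) (Real.sqrt_nonneg _)
  have hB' : ‖b‖ ≤ K * Real.sqrt (σ b b) := by
    calc ‖b‖ ≤ K2 * Real.sqrt (σ b b) := hB
      _ ≤ K * Real.sqrt (σ b b) := by
        apply mul_le_mul_of_nonneg_right (le_max_right _ _) (Real.sqrt_nonneg _)
  have ha2 : ‖a‖^2 ≤ K^2 * σ a a := by
    have h := pow_le_pow_left₀ (norm_nonneg a) hA' 2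
    rwa [mul_pow, Real.sq_sqrt (hnn a)] at h
  have hb2 : ‖b‖^2 ≤ K^2 * σ b b := by
    have h := pow_le_pow_left₀ (norm_nonneg b) hB' 2
    rwa [mul_pow, Real.sq_sqrt (hnn b)] at h
  have hsq : ‖x‖^2 ≤ K^2 * σ x x := by
    rw [hnormsq, hsigsum, mul_add]
    linarith [ha2, hb2]
  have h2 : (K⁻¹ * ‖x‖)^2 ≤ σ x x := by
    have hK2 : (0:ℝ) < K^2 := by positivity
    rw [mul_pow]
    rw [inv_pow]
    rw [inv_mul_le_iff₀ hK2]
    linarith [hsq]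
  exact (Real.le_sqrt (by positivity) (hnn x)).mpr h2
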